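/- Let Q, Q' be quadratic polynomials over C, U a linear space of linear forms, and r a natural number. Then there exists a linear space of linear forms V with dim(V) ≤ 8r such that: for every P in C[U]_2 and all scalars α, β with rank_s(αQ + βQ' + P) ≤ r, we have MS(αQ + βQ' + P) ⊆ V + U. -/

import Mathlib

open MvPolynomial

noncomputable section

/-- A linear form: a homogeneous polynomial of degree 1. -/
def IsLinForm {σ : Type*} (p : MvPolynomial σ ℂ) : Prop := p.IsHomogeneous 1

/-- `Q` admits a representation as a sum of `r` products of pairs of linear forms. -/
def HasRep {σ : Type*} (Q : MvPolynomial σ ℂ) (r : ℕ) : Prop :=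
  ∃ a b : Fin r → MvPolynomial σ ℂ,
    (∀ i, IsLinForm (a i)) ∧ (∀ i, IsLinForm (b i)) ∧ Q = ∑ i, a i * b i

/-- `rank_s Q`: the minimal `r` such that `Q = ∑_{i=1}^r a_{2i-1} a_{2i}` for linear forms. -/
noncomputable def rankS {σ : Type*} (Q : MvPolynomial σ ℂ) : ℕ := sInf {r | HasRep Q r}

/-- The minimal space `MS Q`: the span of the linear forms appearing in a minimal
representation of `Q` (taken as the supremum over all minimal representations,
which coincides with any single one by well-definedness). -/
noncomputable def MS {σ : Type*} (Q : MvPolynomial σ ℂ) : Submodule ℂ (MvPolynomial σ ℂ) :=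
  ⨆ p : {ab : (Fin (rankS Q) → MvPolynomial σ ℂ) × (Fin (rankS Q) → MvPolynomial σ ℂ) //
      (∀ i, IsLinForm (ab.1 i)) ∧ (∀ i, IsLinForm (ab.2 i)) ∧ Q = ∑ i, ab.1 i * ab.2 i},
    Submodule.span ℂ (Set.range p.1.1 ∪ Set.range p.1.2)

/-- `C[V]₂`: the space of homogeneous quadratics depending only on linear forms in `V`. -/
def quadOn {σ : Type*} (V : Submodule ℂ (MvPolynomial σ ℂ)) :
    Submodule ℂ (MvPolynomial σ ℂ) :=
  Submodule.span ℂ {q | ∃ v ∈ V, ∃ w ∈ V, q = v * w}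


/-! If `F = ∑ aᵢ bᵢ` is a representation of minimal length, every `aᵢ, bᵢ` lies in the span of the
directional derivatives `∂_y F`. Otherwise some `y` kills all of them but not `aⱼ`; by symmetry of
the Hessian `∂_y F = 0`, and subtracting from each form the multiple of `aⱼ` that makes it vanish at
`y` gives a representation with `aⱼ` replaced by `0`. So `MS F` lies in every space containing the
derivatives of `F`. Derivatives of `C[U]₂` lie in `U`; choosing pairs `(α, β)` that span all
admissible ones, at most two of them, each realised with a length-`r` representation, the at most
`4r` forms of these representations span a `V` containing the derivatives of every admissible
`αQ + βQ' + P` modulo `U`. -/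

open Module Submodule

section

variable {σ : Type*}

lemma isLinForm_iff_mem {p : MvPolynomial σ ℂ} :
    IsLinForm p ↔ p ∈ homogeneousSubmodule σ ℂ 1 :=
  (mem_homogeneousSubmodule 1 p).symm

lemma HasRep.mono {F : MvPolynomial σ ℂ} {m r : ℕ} (h : HasRep F m) (hmr : m ≤ r) :
    HasRep F r := by
  obtain ⟨k, rfl⟩ := Nat.exists_eq_add_of_le hmr
  obtain ⟨a, b, ha, hb, rfl⟩ := h
  have h0 : ∀ _ : Fin k, IsLinForm (0 : MvPolynomial σ ℂ) := fun _ => isHomogeneous_zero _ _ _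
  refine ⟨Fin.append a 0, Fin.append b 0, Fin.addCases (by simpa) (by simpa),
    Fin.addCases (by simpa) (by simpa), ?_⟩
  simp [Fin.sum_univ_add]

lemma MS_eq_bot_of_not_hasRep {F : MvPolynomial σ ℂ} (h : ¬ HasRep F (rankS F)) : MS F = ⊥ := by
  have : IsEmpty {ab : (Fin (rankS F) → MvPolynomial σ ℂ) × (Fin (rankS F) → MvPolynomial σ ℂ) //
      (∀ i, IsLinForm (ab.1 i)) ∧ (∀ i, IsLinForm (ab.2 i)) ∧ F = ∑ i, ab.1 i * ab.2 i} :=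
    ⟨fun p => h ⟨_, _, p.2⟩⟩
  exact iSup_of_empty _

lemma LinearMap.eqOn_isLinForm {M : Type*} [AddCommGroup M] [Module ℂ M]
    {f g : MvPolynomial σ ℂ →ₗ[ℂ] M} (hfg : ∀ k, f (X k) = g (X k)) {p : MvPolynomial σ ℂ}
    (hp : IsLinForm p) : f p = g p := by
  rw [isLinForm_iff_mem, homogeneousSubmodule_one_eq_span_X] at hp
  exact LinearMap.eqOn_span' (by rintro _ ⟨k, rfl⟩; exact hfg k) hp

lemma exists_eval_ne_zero_of_notMem {W : Submodule ℂ (MvPolynomial σ ℂ)}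
    (hW : W ≤ homogeneousSubmodule σ ℂ 1) {p : MvPolynomial σ ℂ} (hp : IsLinForm p)
    (hpW : p ∉ W) : ∃ y : σ → ℂ, eval y p ≠ 0 ∧ ∀ w ∈ W, eval y w = 0 := by
  obtain ⟨f, hfp, hWf⟩ := W.exists_le_ker_of_notMem hpW
  have hf : ∀ q, IsLinForm q → f q = eval (fun k => f (X k)) q := fun q hq =>
    LinearMap.eqOn_isLinForm (g := (aeval fun k => f (X k)).toLinearMap) (by simp) hq
  exact ⟨fun k => f (X k), by rwa [← hf p hp], fun w hw => by rw [← hf w (hW hw)]; exact hWf hw⟩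

def dirDeriv (y : σ → ℂ) : Derivation ℂ (MvPolynomial σ ℂ) (MvPolynomial σ ℂ) :=
  mkDerivation ℂ fun k => C (y k)

lemma dirDeriv_of_isLinForm (y : σ → ℂ) {p : MvPolynomial σ ℂ} (hp : IsLinForm p) :
    dirDeriv y p = C (eval y p) :=
  LinearMap.eqOn_isLinForm
    (g := (Algebra.linearMap ℂ (MvPolynomial σ ℂ)).comp (aeval y).toLinearMap)
    (by simp [dirDeriv, mkDerivation_X]) hp

section Rep

variable {m : ℕ} {a b : Fin m → MvPolynomial σ ℂ}

lemma dirDeriv_sum_mul (ha : ∀ i, IsLinForm (a i)) (hb : ∀ i, IsLinForm (b i)) (y : σ → ℂ) :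
    dirDeriv y (∑ i, a i * b i) = ∑ i, (eval y (a i) • b i + eval y (b i) • a i) := by
  simp only [map_sum, Derivation.leibniz, dirDeriv_of_isLinForm y (ha _),
    dirDeriv_of_isLinForm y (hb _), smul_eq_mul, smul_eq_C_mul]
  exact Finset.sum_congr rfl fun i _ => by ring

lemma eval_dirDeriv_sum_mul_comm (ha : ∀ i, IsLinForm (a i)) (hb : ∀ i, IsLinForm (b i))
    (y z : σ → ℂ) :
    eval z (dirDeriv y (∑ i, a i * b i)) = eval y (dirDeriv z (∑ i, a i * b i)) := by
  simp only [dirDeriv_sum_mul ha hb, map_sum, map_add, smul_eval]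
  exact Finset.sum_congr rfl fun i _ => by ring

lemma dirDeriv_sum_mul_mem_span (ha : ∀ i, IsLinForm (a i)) (hb : ∀ i, IsLinForm (b i))
    (y : σ → ℂ) : dirDeriv y (∑ i, a i * b i) ∈ span ℂ (Set.range a ∪ Set.range b) := by
  rw [dirDeriv_sum_mul ha hb]
  exact sum_mem fun i _ => add_mem (smul_mem _ _ (subset_span (.inr ⟨i, rfl⟩)))
    (smul_mem _ _ (subset_span (.inl ⟨i, rfl⟩)))

end Rep

lemma hasRep_of_dirDeriv_eq_zero {m : ℕ} {a b : Fin (m + 1) → MvPolynomial σ ℂ}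
    (ha : ∀ i, IsLinForm (a i)) (hb : ∀ i, IsLinForm (b i)) {y : σ → ℂ}
    (hy : dirDeriv y (∑ i, a i * b i) = 0) {j : Fin (m + 1)} (hj : eval y (a j) ≠ 0) :
    HasRep (∑ i, a i * b i) m := by
  rw [dirDeriv_sum_mul ha hb] at hy
  have hyy : ∑ i, eval y (a i) * eval y (b i) = 0 := by
    have := congrArg (eval y) hy
    simp only [map_sum, map_add, smul_eval, map_zero, mul_comm (eval y (b _)), ← two_mul,
      ← Finset.mul_sum] at this
    simpa using this
  -- subtract from every form a multiple of `a j`, chosen so that the new forms vanish at `y`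
  set c := (eval y (a j))⁻¹
  let a' i := a i - (c * eval y (a i)) • a j
  let b' i := b i - (c * eval y (b i)) • a j
  have ha'j : a' j = 0 := by simp [a', c, inv_mul_cancel₀ hj]
  have hexpand : ∀ i, a' i * b' i = a i * b i
      - c • ((eval y (a i) • b i + eval y (b i) • a i) * a j)
      + (c ^ 2 * (eval y (a i) * eval y (b i))) • (a j * a j) := fun i => by
    simp only [a', b', smul_eq_C_mul, map_mul, map_pow]; ring
  have hsum : ∑ i, a' i * b' i = ∑ i, a i * b i := by
    rw [Finset.sum_congr rfl fun i _ => hexpand i, Finset.sum_add_distrib, Finset.sum_sub_distrib,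
      ← Finset.smul_sum, ← Finset.sum_mul, hy, ← Finset.sum_smul, ← Finset.mul_sum, hyy]
    simp
  have haj : ∀ d : ℂ, IsLinForm (d • a j) := fun d => by rw [smul_eq_C_mul]; exact (ha j).C_mul d
  refine ⟨fun i => a' (j.succAbove i), fun i => b' (j.succAbove i),
    fun i => (ha _).sub (haj _), fun i => (hb _).sub (haj _), ?_⟩
  rw [← hsum, Fin.sum_univ_succAbove _ j, ha'j, zero_mul, zero_add]

lemma mem_span_dirDeriv_of_minimal {F : MvPolynomial σ ℂ} {m : ℕ}
    {a b : Fin m → MvPolynomial σ ℂ} (ha : ∀ i, IsLinForm (a i)) (hb : ∀ i, IsLinForm (b i))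
    (hF : F = ∑ i, a i * b i) (hmin : ∀ k, HasRep F k → m ≤ k) (j : Fin m) :
    a j ∈ span ℂ (Set.range fun y => dirDeriv y F) := by
  subst hF
  by_contra hj
  have hW : span ℂ (Set.range fun y => dirDeriv y (∑ i, a i * b i)) ≤
      homogeneousSubmodule σ ℂ 1 := by
    refine span_le.2 ?_
    rintro _ ⟨y, rfl⟩
    dsimp only
    rw [SetLike.mem_coe, dirDeriv_sum_mul ha hb]
    exact sum_mem fun i _ => add_mem (smul_mem _ _ (hb i)) (smul_mem _ _ (ha i))
  obtain ⟨y, hyj, hyW⟩ := exists_eval_ne_zero_of_notMem hW (ha j) hj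
  -- the Hessian is symmetric, so `y` is orthogonal to the whole quadratic form
  have hy : dirDeriv y (∑ i, a i * b i) = 0 := MvPolynomial.funext fun z => by
    rw [eval_dirDeriv_sum_mul_comm ha hb, hyW _ (subset_span ⟨z, rfl⟩), map_zero]
  obtain ⟨m, rfl⟩ := Nat.exists_eq_succ_of_ne_zero j.pos.ne'
  have := hmin m (hasRep_of_dirDeriv_eq_zero ha hb hy hyj)
  omega

lemma MS_le_span_dirDeriv (F : MvPolynomial σ ℂ) :
    MS F ≤ span ℂ (Set.range fun y => dirDeriv y F) := by
  refine iSup_le fun ⟨⟨a, b⟩, ha, hb, hF⟩ => span_le.2 ?_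
  have hmin : ∀ k, HasRep F k → rankS F ≤ k := fun k hk => Nat.sInf_le hk
  rintro _ (⟨i, rfl⟩ | ⟨i, rfl⟩)
  · exact mem_span_dirDeriv_of_minimal ha hb hF hmin i
  · exact mem_span_dirDeriv_of_minimal hb ha (by simp_rw [hF, mul_comm]) hmin i

lemma MS_le_of_forall_dirDeriv_mem {F : MvPolynomial σ ℂ} {T : Submodule ℂ (MvPolynomial σ ℂ)}
    (hT : ∀ y, dirDeriv y F ∈ T) : MS F ≤ T :=
  (MS_le_span_dirDeriv F).trans (span_le.2 (by rintro _ ⟨y, rfl⟩; exact hT y))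

lemma dirDeriv_mem_of_mem_quadOn {U : Submodule ℂ (MvPolynomial σ ℂ)}
    (hU : ∀ v ∈ U, IsLinForm v) {P : MvPolynomial σ ℂ} (hP : P ∈ quadOn U) (y : σ → ℂ) :
    dirDeriv y P ∈ U := by
  induction hP using span_induction with
  | mem _ h =>
    obtain ⟨v, hv, w, hw, rfl⟩ := h
    rw [Derivation.leibniz, dirDeriv_of_isLinForm y (hU v hv),
      dirDeriv_of_isLinForm y (hU w hw), smul_eq_mul, smul_eq_mul, mul_comm v, mul_comm w,
      ← smul_eq_C_mul, ← smul_eq_C_mul]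
    exact add_mem (smul_mem _ _ hv) (smul_mem _ _ hw)
  | zero => simp
  | add _ _ _ _ hx hy => simpa using add_mem hx hy
  | smul c _ _ hx => simpa using smul_mem _ c hx

theorem exists_finrank_le_forall_MS_le {E : Type*} [AddCommGroup E] [Module ℂ E]
    [FiniteDimensional ℂ E] (φ : E →ₗ[ℂ] MvPolynomial σ ℂ)
    (U : Submodule ℂ (MvPolynomial σ ℂ)) (hU : ∀ v ∈ U, IsLinForm v) (r : ℕ) :
    ∃ V : Submodule ℂ (MvPolynomial σ ℂ), (∀ v ∈ V, IsLinForm v) ∧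
      finrank ℂ V ≤ 2 * r * finrank ℂ E ∧
      ∀ P ∈ quadOn U, ∀ e : E, rankS (φ e + P) ≤ r → MS (φ e + P) ≤ V ⊔ U := by
  set S := {e : E | ∃ P ∈ quadOn U, HasRep (φ e + P) r}
  obtain ⟨B, hBS, hBspan, hBli⟩ := exists_linearIndependent ℂ S
  have : Fintype B := hBli.setFinite.fintype
  choose P hP a b ha hb hrep using fun t : B => hBS t.2
  let V := span ℂ (Set.range fun x : B × (Fin r ⊕ Fin r) => Sum.elim (a x.1) (b x.1) x.2)
  let M := ⨅ y : σ → ℂ, (V ⊔ U).comap (dirDeriv y : MvPolynomial σ ℂ →ₗ[ℂ] _)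
  have hMS : ∀ {F}, F ∈ M → MS F ≤ V ⊔ U := fun hF =>
    MS_le_of_forall_dirDeriv_mem fun y => mem_iInf _ |>.1 hF y
  have hUM : quadOn U ≤ M := fun P hP => mem_iInf _ |>.2 fun y =>
    mem_sup_right (dirDeriv_mem_of_mem_quadOn hU hP y)
  have hBM : ∀ t : B, φ t ∈ M := fun t => by
    have hrepM : φ t + P t ∈ M := mem_iInf _ |>.2 fun y => by
      refine mem_sup_left (span_mono ?_ (hrep t ▸ dirDeriv_sum_mul_mem_span (ha t) (hb t) y))
      rintro _ (⟨i, rfl⟩ | ⟨i, rfl⟩)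
      exacts [⟨(t, .inl i), rfl⟩, ⟨(t, .inr i), rfl⟩]
    simpa using sub_mem hrepM (hUM (hP t))
  have hSM : S ⊆ M.comap φ := subset_span.trans <| hBspan ▸ span_le.2 fun t ht => hBM ⟨t, ht⟩
  refine ⟨V, fun v hv => isLinForm_iff_mem.2 (span_le.2 ?_ hv), ?_, fun Pe hPe e he => ?_⟩
  · rintro _ ⟨⟨t, i | i⟩, rfl⟩
    exacts [ha t i, hb t i]
  · refine (finrank_range_le_card _).trans ?_
    have := hBli.fintype_card_le_finrank
    simp only [Fintype.card_prod, Fintype.card_sum, Fintype.card_fin]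
    nlinarith
  · by_cases h : HasRep (φ e + Pe) (rankS (φ e + Pe))
    · exact hMS (add_mem (hSM ⟨Pe, hPe, h.mono he⟩) (hUM hPe))
    · -- a polynomial without any representation has `rankS = sInf ∅ = 0` and `MS = ⊥`
      simp [MS_eq_bot_of_not_hasRep h]

end

theorem stmt_5_general {n : ℕ} (Q Q' : MvPolynomial (Fin n) ℂ)
    (U : Submodule ℂ (MvPolynomial (Fin n) ℂ)) (hU : ∀ v ∈ U, IsLinForm v) (r : ℕ) :
    ∃ V : Submodule ℂ (MvPolynomial (Fin n) ℂ),
      (∀ v ∈ V, IsLinForm v) ∧ Module.finrank ℂ V ≤ 8 * r ∧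
      ∀ P ∈ quadOn U, ∀ α β : ℂ,
        rankS (α • Q + β • Q' + P) ≤ r → MS (α • Q + β • Q' + P) ≤ V ⊔ U := by
  obtain ⟨V, hV, hVrank, hMS⟩ := exists_finrank_le_forall_MS_le
    ((LinearMap.toSpanSingleton ℂ _ Q).coprod (LinearMap.toSpanSingleton ℂ _ Q')) U hU r
  refine ⟨V, hV, ?_, fun P hP α β hr => by simpa using hMS P hP (α, β) (by simpa using hr)⟩
  rw [finrank_prod, finrank_self] at hVrank
  omega

/-- for quadratics `Q, Q'`, a space `U` of linear forms and `r : ℕ`, there is a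
space `V` of linear forms, `dim V ≤ 8r`, such that every low-rank combination
`αQ + βQ' + P` with `P ∈ C[U]₂` has its minimal space inside `V + U`. -/
theorem stmt_5 {n : ℕ} (Q Q' : MvPolynomial (Fin n) ℂ)
    (hQ : Q.IsHomogeneous 2) (hQ' : Q'.IsHomogeneous 2)
    (U : Submodule ℂ (MvPolynomial (Fin n) ℂ)) (hU : ∀ v ∈ U, IsLinForm v) (r : ℕ) :
    ∃ V : Submodule ℂ (MvPolynomial (Fin n) ℂ),
      (∀ v ∈ V, IsLinForm v) ∧ Module.finrank ℂ V ≤ 8 * r ∧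
      ∀ P ∈ quadOn U, ∀ α β : ℂ,
        rankS (α • Q + β • Q' + P) ≤ r → MS (α • Q + β • Q' + P) ≤ V ⊔ U :=
  stmt_5_general Q Q' U hU r
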